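/- Let M₁, M₂ be ITL^e models and Z_n ⊆ ⋯ ⊆ Z_0 a bounded U-bisimulation. Then for all m ≤ n, if w₁ Z_m w₂, then for every formula φ built from atoms, ⊥, ∧, ∨, →, ◯, U of length |φ| ≤ m: M₁, w₁ ⊨ φ iff M₂, w₂ ⊨ φ. -/

import Mathlib

inductive TForm : Type where
  | atom : ℕ → TForm
  | bot : TForm
  | and : TForm → TForm → TForm
  | or : TForm → TForm → TForm
  | imp : TForm → TForm → TForm
  | next : TForm → TForm
  | dia : TForm → TForm
  | box : TForm → TForm
  | untl : TForm → TForm → TForm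
  | rels : TForm → TForm → TForm

/-- Intuitionistic temporal satisfaction over a dynamic poset `(W, ≤, S)`
with valuation `V`. -/
def sat {W : Type} [PartialOrder W] (S : W → W) (V : W → ℕ → Prop) : TForm → W → Prop
  | .atom p, w => V w p
  | .bot, _ => False
  | .and φ ψ, w => sat S V φ w ∧ sat S V ψ w
  | .or φ ψ, w => sat S V φ w ∨ sat S V ψ w
  | .imp φ ψ, w => ∀ v, w ≤ v → sat S V φ v → sat S V ψ v
  | .next φ, w => sat S V φ (S w)
  | .dia φ, w => ∃ k, sat S V φ (S^[k] w)
  | .box φ, w => ∀ k, sat S V φ (S^[k] w)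
  | .untl φ ψ, w => ∃ k, sat S V ψ (S^[k] w) ∧ ∀ i < k, sat S V φ (S^[i] w)
  | .rels φ ψ, w => ∀ k, sat S V ψ (S^[k] w) ∨ ∃ i < k, sat S V φ (S^[i] w)

/-- The length (number of connectives) of a formula. -/
def len : TForm → ℕ
  | .atom _ => 0
  | .bot => 0
  | .and φ ψ => 1 + len φ + len ψ
  | .or φ ψ => 1 + len φ + len ψ
  | .imp φ ψ => 1 + len φ + len ψ
  | .next φ => 1 + len φ
  | .dia φ => 1 + len φ
  | .box φ => 1 + len φ
  | .untl φ ψ => 1 + len φ + len ψ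
  | .rels φ ψ => 1 + len φ + len ψ

/-- Formulas using only the connectives ⊥, ∧, ∨, →, and {next, untl}. -/
def LangU : TForm → Prop
  | .atom _ => True
  | .bot => True
  | .and φ ψ => LangU φ ∧ LangU ψ
  | .or φ ψ => LangU φ ∧ LangU ψ
  | .imp φ ψ => LangU φ ∧ LangU ψ
  | .next φ => LangU φ
  | .dia _ => False
  | .box _ => False
  | .untl φ ψ => LangU φ ∧ LangU ψ
  | .rels _ _ => False


/-!
Induction on the formula, simultaneously at every level `i ≤ n`: the outermost connective of a
formula of length `≤ j + 1` is matched by the corresponding clause of `Z (j + 1)`, which produces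
pairs in `Z j`, where the subformulas agree by induction. The `→` and `U` clauses only produce
pairs above or below the worlds that matter; since truth sets are upward closed, that suffices.
-/

theorem sat_monotone {W : Type} [PartialOrder W] {S : W → W} {V : W → ℕ → Prop}
    (hS : Monotone S) (hV : Monotone V) (φ : TForm) : Monotone (sat S V φ) := by
  induction φ with
  | atom p => exact fun w v h => hV h p
  | bot => exact fun _ _ _ => id
  | and φ ψ ihφ ihψ => exact fun w v h hw => ⟨ihφ h hw.1, ihψ h hw.2⟩
  | or φ ψ ihφ ihψ => exact fun w v h hw => hw.imp (ihφ h) (ihψ h)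
  | imp φ ψ _ _ => exact fun w v h hw u hu => hw u (h.trans hu)
  | next φ ih => exact fun w v h hw => ih (hS h) hw
  | dia φ ih => exact fun w v h ⟨k, hk⟩ => ⟨k, ih (hS.iterate k h) hk⟩
  | box φ ih => exact fun w v h hw k => ih (hS.iterate k h) (hw k)
  | untl φ ψ ihφ ihψ =>
    exact fun w v h ⟨k, hk, hi⟩ =>
      ⟨k, ihψ (hS.iterate k h) hk, fun i hik => ihφ (hS.iterate i h) (hi i hik)⟩
  | rels φ ψ ihφ ihψ =>
    exact fun w v h hw k => (hw k).imp (ihψ (hS.iterate k h))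
      fun ⟨i, hik, hi⟩ => ⟨i, hik, ihφ (hS.iterate i h) hi⟩

section Transfer

variable {W₁ W₂ : Type} [Preorder W₁] [Preorder W₂] {R : W₁ → W₂ → Prop} {w₁ : W₁} {w₂ : W₂}

theorem imp_iff_of_zigzag {P₁ Q₁ : W₁ → Prop} {P₂ Q₂ : W₂ → Prop}
    (hforth : ∀ v₁, w₁ ≤ v₁ → ∃ v₂, w₂ ≤ v₂ ∧ R v₁ v₂)
    (hback : ∀ v₂, w₂ ≤ v₂ → ∃ v₁, w₁ ≤ v₁ ∧ R v₁ v₂)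
    (hP : ∀ u₁ u₂, R u₁ u₂ → (P₁ u₁ ↔ P₂ u₂)) (hQ : ∀ u₁ u₂, R u₁ u₂ → (Q₁ u₁ ↔ Q₂ u₂)) :
    (∀ v₁, w₁ ≤ v₁ → P₁ v₁ → Q₁ v₁) ↔ (∀ v₂, w₂ ≤ v₂ → P₂ v₂ → Q₂ v₂) := by
  constructor
  · intro h v₂ hv₂ hP₂
    obtain ⟨v₁, hv₁, hR⟩ := hback v₂ hv₂
    exact (hQ v₁ v₂ hR).mp (h v₁ hv₁ ((hP v₁ v₂ hR).mpr hP₂))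
  · intro h v₁ hv₁ hP₁
    obtain ⟨v₂, hv₂, hR⟩ := hforth v₁ hv₁
    exact (hQ v₁ v₂ hR).mpr (h v₂ hv₂ ((hP v₁ v₂ hR).mp hP₁))

def HoldsUntil {W : Type} (S : W → W) (P Q : W → Prop) (w : W) : Prop :=
  ∃ k, Q (S^[k] w) ∧ ∀ i < k, P (S^[i] w)

theorem sat_untl {W : Type} [PartialOrder W] (S : W → W) (V : W → ℕ → Prop) (φ ψ : TForm)
    (w : W) : sat S V (.untl φ ψ) w ↔ HoldsUntil S (sat S V φ) (sat S V ψ) w :=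
  Iff.rfl

/-- The (Forth U) clause of a bounded U-bisimulation at `(w₁, w₂)`, for the relation `R`. -/
def UntilForth (S₁ : W₁ → W₁) (S₂ : W₂ → W₂) (R : W₁ → W₂ → Prop) (w₁ : W₁) (w₂ : W₂) :
    Prop :=
  ∀ k₁, ∃ k₂, ∃ v₁ v₂, v₂ ≤ S₂^[k₂] w₂ ∧ S₁^[k₁] w₁ ≤ v₁ ∧ R v₁ v₂ ∧
    ∀ j₂ < k₂, ∃ j₁ < k₁, ∃ u₁ u₂, S₁^[j₁] w₁ ≤ u₁ ∧ u₂ ≤ S₂^[j₂] w₂ ∧ R u₁ u₂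

theorem UntilForth.holdsUntil {S₁ : W₁ → W₁} {S₂ : W₂ → W₂} (h : UntilForth S₁ S₂ R w₁ w₂)
    {P₁ Q₁ : W₁ → Prop} {P₂ Q₂ : W₂ → Prop} (hP₁ : Monotone P₁) (hQ₁ : Monotone Q₁)
    (hP₂ : Monotone P₂) (hQ₂ : Monotone Q₂)
    (hP : ∀ u₁ u₂, R u₁ u₂ → P₁ u₁ → P₂ u₂) (hQ : ∀ u₁ u₂, R u₁ u₂ → Q₁ u₁ → Q₂ u₂)
    (hU : HoldsUntil S₁ P₁ Q₁ w₁) : HoldsUntil S₂ P₂ Q₂ w₂ := by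
  obtain ⟨k₁, hQk₁, hPk₁⟩ := hU
  obtain ⟨k₂, v₁, v₂, hv₂, hv₁, hR, hbefore⟩ := h k₁
  refine ⟨k₂, hQ₂ hv₂ (hQ v₁ v₂ hR (hQ₁ hv₁ hQk₁)), fun j₂ hj₂ => ?_⟩
  obtain ⟨j₁, hj₁, u₁, u₂, hu₁, hu₂, hRu⟩ := hbefore j₂ hj₂
  exact hP₂ hu₂ (hP u₁ u₂ hRu (hP₁ hu₁ (hPk₁ j₁ hj₁)))

end Transfer

structure IsBoundedUBisim {W₁ W₂ : Type} [Preorder W₁] [Preorder W₂]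
    (S₁ : W₁ → W₁) (V₁ : W₁ → ℕ → Prop) (S₂ : W₂ → W₂) (V₂ : W₂ → ℕ → Prop)
    (n : ℕ) (Z : ℕ → W₁ → W₂ → Prop) : Prop where
  antitone : ∀ i < n, ∀ w₁ w₂, Z (i + 1) w₁ w₂ → Z i w₁ w₂
  atoms : ∀ i < n, ∀ w₁ w₂, Z i w₁ w₂ → ∀ p, V₁ w₁ p ↔ V₂ w₂ p
  forth_imp : ∀ i < n, ∀ w₁ w₂, Z (i + 1) w₁ w₂ → ∀ v₁, w₁ ≤ v₁ → ∃ v₂, w₂ ≤ v₂ ∧ Z i v₁ v₂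
  back_imp : ∀ i < n, ∀ w₁ w₂, Z (i + 1) w₁ w₂ → ∀ v₂, w₂ ≤ v₂ → ∃ v₁, w₁ ≤ v₁ ∧ Z i v₁ v₂
  next : ∀ i < n, ∀ w₁ w₂, Z (i + 1) w₁ w₂ → Z i (S₁ w₁) (S₂ w₂)
  forth_u : ∀ i < n, ∀ w₁ w₂, Z (i + 1) w₁ w₂ → UntilForth S₁ S₂ (Z i) w₁ w₂
  back_u : ∀ i < n, ∀ w₁ w₂, Z (i + 1) w₁ w₂ → ∀ k₂ : ℕ, ∃ k₁ : ℕ, ∃ v₁ v₂,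
    v₁ ≤ S₁^[k₁] w₁ ∧ S₂^[k₂] w₂ ≤ v₂ ∧ Z i v₁ v₂ ∧
    ∀ j₁ < k₁, ∃ j₂ < k₂, ∃ u₁ u₂, S₂^[j₂] w₂ ≤ u₂ ∧ u₁ ≤ S₁^[j₁] w₁ ∧ Z i u₁ u₂

namespace IsBoundedUBisim

variable {W₁ W₂ : Type} {S₁ : W₁ → W₁} {V₁ : W₁ → ℕ → Prop} {S₂ : W₂ → W₂}
  {V₂ : W₂ → ℕ → Prop} {n : ℕ} {Z : ℕ → W₁ → W₂ → Prop}

theorem untilForth_back [Preorder W₁] [Preorder W₂] (hZ : IsBoundedUBisim S₁ V₁ S₂ V₂ n Z)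
    {i : ℕ} (hi : i < n) {w₁ : W₁} {w₂ : W₂} (hw : Z (i + 1) w₁ w₂) :
    UntilForth S₂ S₁ (flip (Z i)) w₂ w₁ := fun k₂ => by
  obtain ⟨k₁, v₁, v₂, hv₁, hv₂, hv, hbefore⟩ := hZ.back_u i hi w₁ w₂ hw k₂
  refine ⟨k₁, v₂, v₁, hv₁, hv₂, hv, fun j₁ hj₁ => ?_⟩
  obtain ⟨j₂, hj₂, u₁, u₂, hu₂, hu₁, hu⟩ := hbefore j₁ hj₁
  exact ⟨j₂, hj₂, u₂, u₁, hu₂, hu₁, hu⟩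

theorem atoms_of_le [Preorder W₁] [Preorder W₂] (hZ : IsBoundedUBisim S₁ V₁ S₂ V₂ n Z)
    (hn : 0 < n) {i : ℕ} (hi : i ≤ n) {w₁ : W₁} {w₂ : W₂} (hw : Z i w₁ w₂) (p : ℕ) :
    V₁ w₁ p ↔ V₂ w₂ p := by
  rcases hi.lt_or_eq with hi | rfl
  · exact hZ.atoms i hi w₁ w₂ hw p
  · obtain ⟨m, rfl⟩ := Nat.exists_eq_add_one.mpr hn
    exact hZ.atoms m m.lt_succ_self w₁ w₂ (hZ.antitone m m.lt_succ_self w₁ w₂ hw) p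

theorem sat_iff [PartialOrder W₁] [PartialOrder W₂] (hZ : IsBoundedUBisim S₁ V₁ S₂ V₂ n Z)
    (hn : 0 < n) (hS₁ : Monotone S₁) (hV₁ : Monotone V₁) (hS₂ : Monotone S₂)
    (hV₂ : Monotone V₂) (φ : TForm) (hφ : LangU φ) :
    ∀ i ≤ n, len φ ≤ i → ∀ w₁ w₂, Z i w₁ w₂ → (sat S₁ V₁ φ w₁ ↔ sat S₂ V₂ φ w₂) := by
  induction φ with
  | atom p => exact fun i hi _ w₁ w₂ hw => hZ.atoms_of_le hn hi hw p
  | bot => exact fun _ _ _ _ _ _ => Iff.rfl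
  | dia | box | rels => exact hφ.elim
  | and φ ψ ihφ ihψ =>
    rintro (_ | j) hj hlen w₁ w₂ hw <;> simp only [len] at hlen
    · omega
    have hw' := hZ.antitone j hj w₁ w₂ hw
    exact and_congr (ihφ hφ.1 j (by omega) (by omega) w₁ w₂ hw')
      (ihψ hφ.2 j (by omega) (by omega) w₁ w₂ hw')
  | or φ ψ ihφ ihψ =>
    rintro (_ | j) hj hlen w₁ w₂ hw <;> simp only [len] at hlen
    · omega
    have hw' := hZ.antitone j hj w₁ w₂ hw
    exact or_congr (ihφ hφ.1 j (by omega) (by omega) w₁ w₂ hw')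
      (ihψ hφ.2 j (by omega) (by omega) w₁ w₂ hw')
  | imp φ ψ ihφ ihψ =>
    rintro (_ | j) hj hlen w₁ w₂ hw <;> simp only [len] at hlen
    · omega
    exact imp_iff_of_zigzag (hZ.forth_imp j hj w₁ w₂ hw) (hZ.back_imp j hj w₁ w₂ hw)
      (ihφ hφ.1 j (by omega) (by omega)) (ihψ hφ.2 j (by omega) (by omega))
  | next φ ih =>
    rintro (_ | j) hj hlen w₁ w₂ hw <;> simp only [len] at hlen
    · omega
    exact ih hφ j (by omega) (by omega) _ _ (hZ.next j hj w₁ w₂ hw)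
  | untl φ ψ ihφ ihψ =>
    rintro (_ | j) hj hlen w₁ w₂ hw <;> simp only [len] at hlen
    · omega
    have hφ' := ihφ hφ.1 j (by omega) (by omega)
    have hψ' := ihψ hφ.2 j (by omega) (by omega)
    have mono₁ := sat_monotone hS₁ hV₁
    have mono₂ := sat_monotone hS₂ hV₂
    simp only [sat_untl]
    exact ⟨(hZ.forth_u j hj w₁ w₂ hw).holdsUntil (mono₁ φ) (mono₁ ψ) (mono₂ φ) (mono₂ ψ)
        (fun u₁ u₂ hu => (hφ' u₁ u₂ hu).mp) (fun u₁ u₂ hu => (hψ' u₁ u₂ hu).mp),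
      (hZ.untilForth_back hj hw).holdsUntil (mono₂ φ) (mono₂ ψ) (mono₁ φ) (mono₁ ψ)
        (fun u₂ u₁ hu => (hφ' u₁ u₂ hu).mpr) (fun u₂ u₁ hu => (hψ' u₁ u₂ hu).mpr)⟩

end IsBoundedUBisim

/-- Bounded U-bisimulations preserve U-formulas of bounded length. -/
theorem until_bisim_invariance {W₁ W₂ : Type} [PartialOrder W₁] [PartialOrder W₂]
    (S₁ : W₁ → W₁) (V₁ : W₁ → ℕ → Prop) (S₂ : W₂ → W₂) (V₂ : W₂ → ℕ → Prop)
    (hS₁ : ∀ w v : W₁, w ≤ v → S₁ w ≤ S₁ v)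
    (hV₁ : ∀ w v : W₁, w ≤ v → ∀ p, V₁ w p → V₁ v p)
    (hS₂ : ∀ w v : W₂, w ≤ v → S₂ w ≤ S₂ v)
    (hV₂ : ∀ w v : W₂, w ≤ v → ∀ p, V₂ w p → V₂ v p)
    (n : ℕ) (hn : 0 < n) (Z : ℕ → W₁ → W₂ → Prop)
    (hchain : ∀ i < n, ∀ w₁ w₂, Z (i+1) w₁ w₂ → Z i w₁ w₂)
    (hatoms : ∀ i < n, ∀ w₁ w₂, Z i w₁ w₂ → ∀ p, V₁ w₁ p ↔ V₂ w₂ p)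
    (hforth_imp : ∀ i < n, ∀ w₁ w₂, Z (i+1) w₁ w₂ →
      ∀ v₁, w₁ ≤ v₁ → ∃ v₂, w₂ ≤ v₂ ∧ Z i v₁ v₂)
    (hback_imp : ∀ i < n, ∀ w₁ w₂, Z (i+1) w₁ w₂ →
      ∀ v₂, w₂ ≤ v₂ → ∃ v₁, w₁ ≤ v₁ ∧ Z i v₁ v₂)
    (hnext : ∀ i < n, ∀ w₁ w₂, Z (i+1) w₁ w₂ → Z i (S₁ w₁) (S₂ w₂))
    (hforth_u : ∀ i < n, ∀ w₁ w₂, Z (i+1) w₁ w₂ → ∀ k₁ : ℕ, ∃ k₂ : ℕ, ∃ v₁ v₂,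
      v₂ ≤ S₂^[k₂] w₂ ∧ S₁^[k₁] w₁ ≤ v₁ ∧ Z i v₁ v₂ ∧
      ∀ j₂ < k₂, ∃ j₁ < k₁, ∃ u₁ u₂,
        S₁^[j₁] w₁ ≤ u₁ ∧ u₂ ≤ S₂^[j₂] w₂ ∧ Z i u₁ u₂)
    (hback_u : ∀ i < n, ∀ w₁ w₂, Z (i+1) w₁ w₂ → ∀ k₂ : ℕ, ∃ k₁ : ℕ, ∃ v₁ v₂,
      v₁ ≤ S₁^[k₁] w₁ ∧ S₂^[k₂] w₂ ≤ v₂ ∧ Z i v₁ v₂ ∧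
      ∀ j₁ < k₁, ∃ j₂ < k₂, ∃ u₁ u₂,
        S₂^[j₂] w₂ ≤ u₂ ∧ u₁ ≤ S₁^[j₁] w₁ ∧ Z i u₁ u₂) :
    ∀ i ≤ n, ∀ w₁ w₂, Z i w₁ w₂ → ∀ φ, LangU φ → len φ ≤ i →
      (sat S₁ V₁ φ w₁ ↔ sat S₂ V₂ φ w₂) := by
  have hZ : IsBoundedUBisim S₁ V₁ S₂ V₂ n Z :=
    ⟨hchain, hatoms, hforth_imp, hback_imp, hnext, hforth_u, hback_u⟩
  intro i hi w₁ w₂ hw φ hφ hlen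
  exact hZ.sat_iff hn hS₁ hV₁ hS₂ hV₂ φ hφ i hi hlen w₁ w₂ hw
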